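/- Let R_0 = ℂ[X₁,X₂], S = R_0[U₁,U₂] and I = (U₁(X₁U₁+X₂U₂), U₂(X₁U₁+X₂U₂)) ⊆ S. Then content(I) = (X₁, X₂) as an ideal of R_0, yet the element X₁U₁ + X₂U₂ generates the (U₁,U₂)-torsion submodule of S/I and this submodule does not vanish after localizing at X₁; in particular, the image of X₁U₁+X₂U₂ in (S/I) localized at X₁ is a nonzero element annihilated by the ideal (U₁,U₂). -/

import Mathlib

open MvPolynomial

set_option synthInstance.maxHeartbeats 1000000
set_option maxHeartbeats 2000000

noncomputable section

/-- `R₀ = ℂ[X₁,X₂]`. -/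
abbrev R0 := MvPolynomial (Fin 2) ℂ

/-- `S = R₀[U₁,U₂] = ℂ[X₁,X₂][U₁,U₂]`. -/
abbrev S := MvPolynomial (Fin 2) R0

/-- The content of an ideal of `R₀[U₁,U₂]`: the ideal of `R₀` generated by all
coefficients of all of its elements. -/
def idealContent (J : Ideal S) : Ideal R0 :=
  Ideal.span (⋃ f ∈ J, Set.range fun m => MvPolynomial.coeff m f)

/-- `g = X₁U₁ + X₂U₂` as an element of `S`. -/
def gElt : S := C (X 0) * X 0 + C (X 1) * X 1

/-- The ideal `I = (U₁(X₁U₁+X₂U₂), U₂(X₁U₁+X₂U₂))` of `S`. -/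
def idlI : Ideal S := Ideal.span {(X 0 : S) * gElt, (X 1 : S) * gElt}

/-!
As a linear form in `U₁, U₂` whose coefficients `X₁, X₂` are relatively prime, `g = X₁U₁ + X₂U₂`
is irreducible, hence prime in the factorial ring `S`, and `I = (U₁, U₂) · (g)`. If `U₁ⁿ f ∈ I`
then `g ∣ U₁ⁿ f` with `g ∤ U₁`, so `g ∣ f`: the `(U₁, U₂)`-torsion of `S/I` is `(ḡ)`. If
`X₁ᵏ g ∈ I`, cancelling `g` gives `X₁ᵏ ∈ (U₁, U₂)`, which fails on constant terms. Finally
`I ⊆ (g)` has all coefficients in `(X₁, X₂)`, while `U₁g` has both `X₁` and `X₂` as coefficients.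
-/

section

variable {R : Type*} [CommRing R]

theorem mul_mem_span_pair_mul_iff [IsDomain R] {a b f g : R} (hg : g ≠ 0) :
    f * g ∈ Ideal.span {a * g, b * g} ↔ f ∈ Ideal.span {a, b} := by
  simp only [Ideal.mem_span_pair]
  exact ⟨fun ⟨x, y, h⟩ => ⟨x, y, mul_right_cancel₀ hg (by linear_combination h)⟩,
    fun ⟨x, y, h⟩ => ⟨x, y, by linear_combination g * h⟩⟩

theorem exists_pow_mul_eq_zero_iff_mem_span_mk {I K : Ideal R} {g s : R} (hg : Prime g)
    (hI : I ≤ Ideal.span {g}) (hKg : ∀ k ∈ K, k * g ∈ I) (hs : s ∈ K) (hgs : ¬g ∣ s)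
    (x : R ⧸ I) :
    (∃ n : ℕ, ∀ y ∈ K.map (Ideal.Quotient.mk I) ^ n, y * x = 0) ↔
      x ∈ Ideal.span {Ideal.Quotient.mk I g} := by
  constructor
  · rintro ⟨n, hn⟩
    obtain ⟨f, rfl⟩ := Ideal.Quotient.mk_surjective x
    have hsf : s ^ n * f ∈ I := Ideal.Quotient.eq_zero_iff_mem.mp <| by
      simpa using hn _ (Ideal.pow_mem_pow (Ideal.mem_map_of_mem _ hs) n)
    obtain ⟨q, rfl⟩ := (hg.dvd_or_dvd (Ideal.mem_span_singleton.mp (hI hsf))).resolve_left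
      fun h => hgs (hg.dvd_of_dvd_pow h)
    exact Ideal.mem_span_singleton.mpr ⟨Ideal.Quotient.mk I q, map_mul _ _ _⟩
  · intro hx
    obtain ⟨c, rfl⟩ := Ideal.mem_span_singleton.mp hx
    refine ⟨1, fun y hy => ?_⟩
    obtain ⟨k, hk, rfl⟩ :=
      (Ideal.mem_map_iff_of_surjective _ Ideal.Quotient.mk_surjective).mp (by simpa using hy)
    rw [← mul_assoc, ← map_mul, Ideal.Quotient.eq_zero_iff_mem.mpr (hKg k hk), zero_mul]

end

theorem idealContent_le_iff {J : Ideal S} {a : Ideal R0} :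
    idealContent J ≤ a ↔ J ≤ a.map C := by
  rw [idealContent, Ideal.span_le, Set.iUnion₂_subset_iff]
  simp only [Set.range_subset_iff, SetLike.le_def, mem_map_C_iff, SetLike.mem_coe]

theorem coeff_mem_idealContent {J : Ideal S} {f : S} (hf : f ∈ J) (m : Fin 2 →₀ ℕ) :
    coeff m f ∈ idealContent J :=
  Ideal.subset_span (Set.mem_biUnion hf (Set.mem_range_self m))

theorem gElt_eq_sumSMulX :
    gElt = sumSMulX (Finsupp.single 0 (X 0) + Finsupp.single 1 (X 1)) := by
  simp [gElt, sumSMulX, smul_eq_C_mul]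

theorem isRelPrime_X_zero_X_one : IsRelPrime (X 0 : R0) (X 1) :=
  (X_prime.irreducible.isRelPrime_iff_not_dvd).mpr (by simp [X_dvd_X])

theorem prime_gElt : Prime gElt := by
  rw [← UniqueFactorizationMonoid.irreducible_iff_prime, gElt_eq_sumSMulX]
  apply irreducible_sumSMulX
  · exact ⟨0, by simp⟩
  · intro r hr
    exact isRelPrime_X_zero_X_one (by simpa using hr 0) (by simpa using hr 1)

theorem coeff_single_gElt (i : Fin 2) : coeff (Finsupp.single i 1) gElt = X i := by
  fin_cases i <;> simp [gElt, coeff_X, Finsupp.single_eq_single_iff]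

theorem not_gElt_dvd_X_zero : ¬gElt ∣ (X 0 : S) := by
  rintro ⟨t, ht⟩
  have h := congrArg (aeval (![1, 0] : Fin 2 → R0)) ht
  simp only [gElt, map_add, map_mul, aeval_X, aeval_C, Algebra.algebraMap_self, RingHom.id_apply,
    Matrix.cons_val_zero, Matrix.cons_val_one, mul_one, mul_zero, add_zero] at h
  exact X_prime.not_isUnit (IsUnit.of_mul_eq_one _ h.symm)

theorem idlI_le_span_gElt : idlI ≤ Ideal.span {gElt} :=
  Ideal.span_le.mpr <| Set.pair_subset
    (Ideal.mul_mem_left _ _ (Ideal.mem_span_singleton_self _))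
    (Ideal.mul_mem_left _ _ (Ideal.mem_span_singleton_self _))

theorem mul_gElt_mem_idlI_iff {f : S} : f * gElt ∈ idlI ↔ f ∈ Ideal.span {X 0, X 1} :=
  mul_mem_span_pair_mul_iff prime_gElt.ne_zero

theorem C_mul_gElt_notMem_idlI {r : R0} (hr : r ≠ 0) : C r * gElt ∉ idlI := by
  rw [mul_gElt_mem_idlI_iff, Ideal.mem_span_pair]
  rintro ⟨a, b, hab⟩
  exact hr (by simpa using (congrArg constantCoeff hab).symm)

theorem idealContent_idlI : idealContent idlI = Ideal.span {(X 0 : R0), (X 1 : R0)} := by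
  have hX (i : Fin 2) : X i ∈ idealContent idlI := by
    have := coeff_mem_idealContent (Ideal.subset_span (Set.mem_insert _ _) : X 0 * gElt ∈ idlI)
      (Finsupp.single 0 1 + Finsupp.single i 1)
    rwa [coeff_X_mul, coeff_single_gElt] at this
  refine le_antisymm (idealContent_le_iff.mpr ?_)
    (Ideal.span_le.mpr (Set.pair_subset (hX 0) (hX 1)))
  refine idlI_le_span_gElt.trans ((Ideal.span_singleton_le_iff_mem _).mpr ?_)
  exact add_mem (Ideal.mul_mem_right _ _ (Ideal.mem_map_of_mem C (Ideal.subset_span (by simp))))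
    (Ideal.mul_mem_right _ _ (Ideal.mem_map_of_mem C (Ideal.subset_span (by simp))))

theorem stmt_18 :
    idealContent idlI = Ideal.span {(X 0 : R0), (X 1 : R0)} ∧
    (∀ x : S ⧸ idlI,
      (∃ n : ℕ,
        ∀ y ∈ (Ideal.span {Ideal.Quotient.mk idlI (X 0 : S),
            Ideal.Quotient.mk idlI (X 1 : S)}) ^ n, y * x = 0) ↔
        x ∈ Ideal.span {Ideal.Quotient.mk idlI gElt}) ∧
    Ideal.Quotient.mk idlI ((X 0 : S) * gElt) = 0 ∧
    Ideal.Quotient.mk idlI ((X 1 : S) * gElt) = 0 ∧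
    (∀ (L : Type) [CommRing L] [Algebra (S ⧸ idlI) L]
        [IsLocalization.Away (Ideal.Quotient.mk idlI (C (X 0) : S)) L],
      @algebraMap (S ⧸ idlI) L _ _ ‹_› (Ideal.Quotient.mk idlI gElt) ≠ 0) := by
  have hU : Ideal.span {Ideal.Quotient.mk idlI (X 0 : S), Ideal.Quotient.mk idlI (X 1 : S)} =
      (Ideal.span {X 0, X 1}).map (Ideal.Quotient.mk idlI) := by
    rw [Ideal.map_span, Set.image_pair]
  refine ⟨idealContent_idlI, fun x => hU ▸ exists_pow_mul_eq_zero_iff_mem_span_mk prime_gElt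
      idlI_le_span_gElt (fun _ => mul_gElt_mem_idlI_iff.mpr)
      (Ideal.subset_span (Set.mem_insert _ _)) not_gElt_dvd_X_zero x,
    Ideal.Quotient.eq_zero_iff_mem.mpr (Ideal.subset_span (Set.mem_insert _ _)),
    Ideal.Quotient.eq_zero_iff_mem.mpr (Ideal.subset_span (Set.mem_insert_of_mem _ rfl)), ?_⟩
  intro L _ _ _ h
  obtain ⟨⟨_, k, rfl⟩, hk⟩ :=
    (IsLocalization.map_eq_zero_iff (Submonoid.powers (Ideal.Quotient.mk idlI (C (X 0)))) L _).mp h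
  refine C_mul_gElt_notMem_idlI (pow_ne_zero k (X_ne_zero 0)) (Ideal.Quotient.eq_zero_iff_mem.mp ?_)
  rwa [map_pow, map_mul, map_pow]

end
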